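/- Let g ∈ L¹(0,T;ℝ) be nonnegative and let δ < 2 with δ ≠ 1. Then the double integral ∫₀ᵀ ∫₀ᵀ |t−s|^{−δ} (∫_{min(t,s)}^{max(t,s)} g(r) dr) dt ds is finite. -/

import Mathlib

open MeasureTheory Set
open scoped ENNReal

/-!
By Tonelli, the double integral is at most `∫₀ᵀ |g(r)| k(r) dr`, where `k(r)` is the integral of
`|t - s|^{-δ}` over the pairs `(t, s) ∈ [0, T]²` with `r ∈ (t ∧ s, t ∨ s]`; so it suffices to
bound `k` uniformly in `r`. For `δ ≤ 0` the kernel is at most `T^{-δ}`. For `0 < δ < 2`, since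
`r` lies between `t` and `s`, `|t - s|^{-δ} ≤ |t - r|^{-δ/2} |s - r|^{-δ/2}`, and the right-hand
side integrates over `[0, T]²` to the square of `∫₀ᵀ |t - r|^{-δ/2} dt`, which is bounded in `r`
because `δ / 2 < 1`.
-/

theorem ENNReal.rpow_le_rpow_of_nonpos {x y : ℝ≥0∞} {z : ℝ} (hxy : x ≤ y) (hz : z ≤ 0) :
    y ^ z ≤ x ^ z := by
  simpa only [ENNReal.rpow_neg, inv_inv] using
    ENNReal.inv_le_inv.2 (ENNReal.rpow_le_rpow hxy (neg_nonneg.2 hz))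

theorem enorm_abs_rpow_of_ne_zero {x : ℝ} (hx : x ≠ 0) (p : ℝ) : ‖|x| ^ p‖ₑ = ‖x‖ₑ ^ p := by
  rw [Real.enorm_of_nonneg (by positivity), ← ENNReal.ofReal_rpow_of_pos (abs_pos.2 hx),
    Real.enorm_eq_ofReal_abs]

theorem setLIntegral_Icc_enorm_rpow_neg_lt_top {a : ℝ} (ha : a < 1) (T : ℝ) :
    ∫⁻ x in Icc (-T) T, ‖x‖ₑ ^ (-a) < ∞ := by
  have hloc : LocallyIntegrable (fun x : ℝ => |x| ^ (-a)) :=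
    locallyIntegrable_of_norm_le_rpow (C := 1) (by simp) (by simpa using ha)
      (.of_forall fun x => by
        simp [Real.norm_eq_abs, abs_of_nonneg (by positivity : 0 ≤ |x| ^ (-a))])
      (measurable_abs.pow_const _).aestronglyMeasurable
  calc ∫⁻ x in Icc (-T) T, ‖x‖ₑ ^ (-a) = ∫⁻ x in Icc (-T) T, ‖|x| ^ (-a)‖ₑ := by
        refine lintegral_congr_ae (ae_restrict_of_ae ?_)
        filter_upwards [Measure.ae_ne volume 0] with x hx
        exact (enorm_abs_rpow_of_ne_zero hx _).symm
    _ < ∞ := (hloc.integrableOn_isCompact isCompact_Icc).2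

theorem setLIntegral_Icc_enorm_sub_rpow_le {T r : ℝ} (hr : r ∈ Icc 0 T) (a : ℝ) :
    ∫⁻ t in Icc 0 T, ‖t - r‖ₑ ^ (-a) ≤ ∫⁻ x in Icc (-T) T, ‖x‖ₑ ^ (-a) := by
  have hsub : Icc 0 T ⊆ (· - r) ⁻¹' Icc (-T) T := fun t ht => by
    constructor <;> linarith [ht.1, ht.2, hr.1, hr.2]
  calc ∫⁻ t in Icc 0 T, ‖t - r‖ₑ ^ (-a)
      ≤ ∫⁻ t, (Icc (-T) T).indicator (fun x => ‖x‖ₑ ^ (-a)) (t - r) := by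
        rw [← lintegral_indicator measurableSet_Icc]
        exact lintegral_mono fun t => indicator_le_indicator_of_subset hsub (fun _ => zero_le) t
    _ = ∫⁻ x in Icc (-T) T, ‖x‖ₑ ^ (-a) := by
        rw [lintegral_sub_right_eq_self, lintegral_indicator measurableSet_Icc]

-- The powers are taken in `ℝ≥0∞`, where `0 ^ (-a) = ∞`, so that no case `r ∈ {t, s}` is lost.
theorem enorm_abs_sub_rpow_le_mul {t s r a : ℝ} (ha : 0 ≤ a)
    (hr : r ∈ Ioc (min t s) (max t s)) :
    ‖|t - s| ^ (-(2 * a))‖ₑ ≤ ‖t - r‖ₑ ^ (-a) * ‖s - r‖ₑ ^ (-a) := by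
  have hts : t - s ≠ 0 := sub_ne_zero.2 fun h => by simp [h] at hr
  have hr' : r ∈ uIcc t s := Ioc_subset_Icc_self hr
  have ht : ‖t - r‖ₑ ≤ ‖t - s‖ₑ := by
    simpa only [enorm_le_iff_norm_le, Real.norm_eq_abs, abs_sub_comm] using
      abs_sub_left_of_mem_uIcc hr'
  have hs : ‖s - r‖ₑ ≤ ‖t - s‖ₑ := by
    simpa only [enorm_le_iff_norm_le, Real.norm_eq_abs, abs_sub_comm] using
      abs_sub_right_of_mem_uIcc hr'
  rw [enorm_abs_rpow_of_ne_zero hts, show -(2 * a) = -a + -a by ring,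
    ENNReal.rpow_add _ _ (by simpa using hts) enorm_ne_top]
  have hna : -a ≤ 0 := neg_nonpos.2 ha
  exact mul_le_mul' (ENNReal.rpow_le_rpow_of_nonpos ht hna) (ENNReal.rpow_le_rpow_of_nonpos hs hna)

def straddling (r : ℝ) : Set (ℝ × ℝ) := {p | r ∈ Ioc (min p.1 p.2) (max p.1 p.2)}

theorem indicator_straddling_apply (k : ℝ × ℝ → ℝ) (p : ℝ × ℝ) (r : ℝ) :
    (straddling r).indicator k p =
      (Ioc (min p.1 p.2) (max p.1 p.2)).indicator (fun _ => k p) r := by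
  by_cases hr : r ∈ Ioc (min p.1 p.2) (max p.1 p.2)
  · rw [indicator_of_mem hr, indicator_of_mem (show p ∈ straddling r from hr)]
  · rw [indicator_of_notMem hr, indicator_of_notMem (show p ∉ straddling r from hr)]

theorem measurable_indicator_straddling {k : ℝ × ℝ → ℝ} (hk : Measurable k) :
    Measurable fun z : (ℝ × ℝ) × ℝ => (straddling z.2).indicator k z.1 := by
  have h₁ : MeasurableSet {z : (ℝ × ℝ) × ℝ | min z.1.1 z.1.2 < z.2} :=
    measurableSet_lt (by fun_prop) (by fun_prop)
  have h₂ : MeasurableSet {z : (ℝ × ℝ) × ℝ | z.2 ≤ max z.1.1 z.1.2} :=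
    measurableSet_le (by fun_prop) (by fun_prop)
  exact (hk.comp measurable_fst).indicator (h₁.inter h₂)

theorem setIntegral_indicator_straddling_mul {T : ℝ} {p : ℝ × ℝ} (hp : p ∈ Icc 0 T ×ˢ Icc 0 T)
    (k : ℝ × ℝ → ℝ) (g : ℝ → ℝ) :
    ∫ r in Icc 0 T, (straddling r).indicator k p * g r =
      k p * ∫ r in (min p.1 p.2)..(max p.1 p.2), g r := by
  have hsub : Ioc (min p.1 p.2) (max p.1 p.2) ⊆ Icc 0 T := fun r hr =>
    ⟨(le_min hp.1.1 hp.2.1).trans hr.1.le, hr.2.trans (max_le hp.1.2 hp.2.2)⟩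
  simp_rw [indicator_straddling_apply, ← indicator_mul_left,
    setIntegral_indicator measurableSet_Ioc, inter_eq_right.2 hsub, integral_const_mul,
    intervalIntegral.integral_of_le min_le_max]

theorem exists_setLIntegral_straddling_kernel_le (T : ℝ) {δ : ℝ} (hδ : δ < 2) :
    ∃ C ≠ ∞, ∀ r ∈ Icc 0 T, ∫⁻ p in Icc 0 T ×ˢ Icc 0 T,
      ‖(straddling r).indicator (fun p => |p.1 - p.2| ^ (-δ)) p‖ₑ ≤ C := by
  rcases le_or_gt δ 0 with hδ0 | hδ0
  · refine ⟨‖T ^ (-δ)‖ₑ * volume (Icc 0 T ×ˢ Icc 0 T),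
      ENNReal.mul_ne_top enorm_ne_top (isCompact_Icc.prod isCompact_Icc).measure_lt_top.ne,
      fun r _ => ?_⟩
    rw [← setLIntegral_const]
    refine setLIntegral_mono measurable_const fun p hp =>
      (enorm_indicator_le_enorm_self _ _).trans ?_
    obtain ⟨⟨h₁, h₂⟩, h₃, h₄⟩ := hp
    have hdist : |p.1 - p.2| ≤ T := abs_sub_le_iff.2 ⟨by linarith, by linarith⟩
    rw [enorm_le_iff_norm_le, Real.norm_of_nonneg (by positivity),
      Real.norm_of_nonneg (Real.rpow_nonneg (by linarith) _)]
    exact Real.rpow_le_rpow (abs_nonneg _) hdist (by linarith)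
  · obtain ⟨a, rfl⟩ : ∃ a, δ = 2 * a := ⟨δ / 2, by ring⟩
    refine ⟨(∫⁻ x in Icc (-T) T, ‖x‖ₑ ^ (-a)) ^ 2,
      (ENNReal.pow_lt_top (setLIntegral_Icc_enorm_rpow_neg_lt_top (by linarith) T)).ne,
      fun r hr => ?_⟩
    calc _ ≤ ∫⁻ p in Icc 0 T ×ˢ Icc 0 T, ‖p.1 - r‖ₑ ^ (-a) * ‖p.2 - r‖ₑ ^ (-a) := by
          refine lintegral_mono fun p => ?_
          by_cases hp : p ∈ straddling r
          · rw [indicator_of_mem hp]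
            exact enorm_abs_sub_rpow_le_mul (by linarith) hp
          · rw [indicator_of_notMem hp, enorm_zero]
            exact zero_le
      _ = (∫⁻ t in Icc 0 T, ‖t - r‖ₑ ^ (-a)) ^ 2 := by
          rw [Measure.volume_eq_prod, ← Measure.prod_restrict, sq,
            lintegral_prod_mul (f := fun t => ‖t - r‖ₑ ^ (-a)) (g := fun t => ‖t - r‖ₑ ^ (-a))
              (by fun_prop) (by fun_prop)]
      _ ≤ _ := by
          gcongr ?_ ^ 2
          exact setLIntegral_Icc_enorm_sub_rpow_le hr a

theorem integrable_prod_mul_snd_of_ae_lintegral_le {α β : Type*} [MeasurableSpace α]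
    [MeasurableSpace β] {μ : Measure α} {ν : Measure β} [SFinite μ] [SFinite ν]
    {K : α × β → ℝ} {g : β → ℝ} {C : ℝ≥0∞} (hK : AEStronglyMeasurable K (μ.prod ν))
    (hKC : ∀ᵐ y ∂ν, ∫⁻ x, ‖K (x, y)‖ₑ ∂μ ≤ C) (hC : C ≠ ∞) (hg : Integrable g ν) :
    Integrable (fun z => K z * g z.2) (μ.prod ν) := by
  have hKg : AEStronglyMeasurable (fun z => K z * g z.2) (μ.prod ν) := hK.mul hg.1.comp_snd
  refine ⟨hKg, ?_⟩
  calc ∫⁻ z, ‖K z * g z.2‖ₑ ∂μ.prod ν = ∫⁻ y, (∫⁻ x, ‖K (x, y)‖ₑ ∂μ) * ‖g y‖ₑ ∂ν := by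
        simp_rw [lintegral_prod_symm _ hKg.enorm, enorm_mul,
          lintegral_mul_const' _ _ enorm_ne_top]
    _ ≤ ∫⁻ y, C * ‖g y‖ₑ ∂ν := lintegral_mono_ae (hKC.mono fun y hy => by gcongr)
    _ = C * ∫⁻ y, ‖g y‖ₑ ∂ν := lintegral_const_mul' _ _ hC
    _ < ∞ := ENNReal.mul_lt_top hC.lt_top hg.2

theorem stmt_0_general (T : ℝ) (δ : ℝ) (hδ : δ < 2)
    (g : ℝ → ℝ) (hg : IntegrableOn g (Set.Icc 0 T)) :
    IntegrableOn
      (fun p : ℝ × ℝ => |p.1 - p.2| ^ (-δ) * ∫ r in (min p.1 p.2)..(max p.1 p.2), g r)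
      (Set.Icc 0 T ×ˢ Set.Icc 0 T) := by
  have hK := measurable_indicator_straddling (k := fun p => |p.1 - p.2| ^ (-δ)) (by fun_prop)
  obtain ⟨C, hC, hKC⟩ := exists_setLIntegral_straddling_kernel_le T hδ
  have hKg := integrable_prod_mul_snd_of_ae_lintegral_le hK.aestronglyMeasurable
    ((ae_restrict_iff' measurableSet_Icc).2 (.of_forall hKC)) hC hg
  refine hKg.integral_prod_left.congr ?_
  filter_upwards [ae_restrict_mem (measurableSet_Icc.prod measurableSet_Icc)] with p hp
  exact setIntegral_indicator_straddling_mul hp _ g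

/-- Lemma 3.8: for nonnegative `g ∈ L¹(0,T)` and `δ < 2`, `δ ≠ 1`, the double integral
`∫₀ᵀ∫₀ᵀ |t-s|^{-δ} ∫_{t∧s}^{t∨s} g(r) dr dt ds` is finite. -/
theorem stmt_0 (T : ℝ) (hT : 0 < T) (δ : ℝ) (hδ : δ < 2) (hδ1 : δ ≠ 1)
    (g : ℝ → ℝ) (hg : IntegrableOn g (Set.Icc 0 T)) (hg0 : ∀ r, 0 ≤ g r) :
    IntegrableOn
      (fun p : ℝ × ℝ => |p.1 - p.2| ^ (-δ) * ∫ r in (min p.1 p.2)..(max p.1 p.2), g r)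
      (Set.Icc 0 T ×ˢ Set.Icc 0 T) :=
  stmt_0_general T δ hδ g hg
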